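/- arXiv:2305.18755 — 5 statements merged into one kernel-verified Lean document; each statement's English description precedes it below -/
import Mathlib

section
/- For the logistic kernel κ(t) = 4/(e^{√t} + 2 + e^{-√t}), for all t > 0 the quantity -κ'(t)·t/κ(t) equals (e^{√t} - 1)√t / (2(e^{√t} + 1)), and this quantity satisfies √t/2 - 1/2 ≤ (e^{√t} - 1)√t / (2(e^{√t} + 1)) ≤ √t/2. -/
/-- For the logistic kernel κ(t) = 4/(e^{√t} + 2 + e^{-√t}), for all t > 0 the quantity
-κ'(t)·t/κ(t) equals (e^{√t} - 1)√t / (2(e^{√t} + 1)), and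
√t/2 - 1/2 ≤ (e^{√t} - 1)√t / (2(e^{√t} + 1)) ≤ √t/2. -/
theorem logistic_kernel_relative_distance_smooth
    (κ : ℝ → ℝ)
    (hκ : ∀ t : ℝ, 0 < t →
      κ t = 4 / (Real.exp (Real.sqrt t) + 2 + Real.exp (-Real.sqrt t))) :
    ∀ t : ℝ, 0 < t →
      (-(deriv κ t) * t / κ t =
        (Real.exp (Real.sqrt t) - 1) * Real.sqrt t /
          (2 * (Real.exp (Real.sqrt t) + 1))) ∧
      Real.sqrt t / 2 - 1 / 2 ≤
        (Real.exp (Real.sqrt t) - 1) * Real.sqrt t /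
          (2 * (Real.exp (Real.sqrt t) + 1)) ∧
      (Real.exp (Real.sqrt t) - 1) * Real.sqrt t /
          (2 * (Real.exp (Real.sqrt t) + 1)) ≤ Real.sqrt t / 2 := by
  intro t ht
  set s := Real.sqrt t with hsdef
  have hs : 0 < s := Real.sqrt_pos.mpr ht
  have hts : t = s ^ 2 := (Real.sq_sqrt ht.le).symm
  have hE : Real.exp s * Real.exp (-s) = 1 := by
    rw [← Real.exp_add]; simp
  have hEpos : 0 < Real.exp s := Real.exp_pos _
  have hE'pos : 0 < Real.exp (-s) := Real.exp_pos _
  have hDpos : 0 < Real.exp s + 2 + Real.exp (-s) := by positivity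
  have hD1pos : 0 < Real.exp s + 1 := by positivity
  constructor
  · -- derivative part
    have hsqrt : HasDerivAt Real.sqrt (1 / (2 * s)) t := Real.hasDerivAt_sqrt ht.ne'
    have h1 : HasDerivAt (fun u => Real.exp (Real.sqrt u))
        (Real.exp s * (1 / (2 * s))) t := (Real.hasDerivAt_exp s).comp t hsqrt
    have h2 : HasDerivAt (fun u => Real.exp (-Real.sqrt u))
        (Real.exp (-s) * -(1 / (2 * s))) t :=
      by have := (Real.hasDerivAt_exp (-s)).comp t hsqrt.neg; exact this
    have hD : HasDerivAt (fun u => Real.exp (Real.sqrt u) + 2 + Real.exp (-Real.sqrt u))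
        (Real.exp s * (1 / (2 * s)) + Real.exp (-s) * -(1 / (2 * s))) t :=
      (h1.add_const 2).add h2
    have hdiv : HasDerivAt (fun u => 4 / (Real.exp (Real.sqrt u) + 2 + Real.exp (-Real.sqrt u)))
        ((0 * (Real.exp s + 2 + Real.exp (-s)) -
          4 * (Real.exp s * (1 / (2 * s)) + Real.exp (-s) * -(1 / (2 * s)))) /
          (Real.exp s + 2 + Real.exp (-s)) ^ 2) t :=
      (hasDerivAt_const t (4:ℝ)).div hD hDpos.ne'
    have heq : κ =ᶠ[nhds t] fun u => 4 / (Real.exp (Real.sqrt u) + 2 + Real.exp (-Real.sqrt u)) := by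
      filter_upwards [eventually_gt_nhds ht] with u hu using hκ u hu
    have hderiv : deriv κ t =
        (0 * (Real.exp s + 2 + Real.exp (-s)) -
          4 * (Real.exp s * (1 / (2 * s)) + Real.exp (-s) * -(1 / (2 * s)))) /
          (Real.exp s + 2 + Real.exp (-s)) ^ 2 := by
      rw [heq.deriv_eq]; exact hdiv.deriv
    rw [hderiv, hκ t ht, ← hsdef, hts]
    have key : (Real.exp s - Real.exp (-s)) * (Real.exp s + 1) =
        (Real.exp s - 1) * (Real.exp s + 2 + Real.exp (-s)) := by nlinarith [hE]
    field_simp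
    nlinarith [hE, sq_nonneg s, mul_pos hs hDpos, mul_pos hs hD1pos,
      mul_pos (mul_pos hs hs) hDpos, key,
      mul_pos (mul_pos hs hs) (mul_pos hDpos hD1pos)]
  · constructor
    · -- lower bound
      have hhalf : Real.exp s = Real.exp (s / 2) ^ 2 := by
        rw [sq, ← Real.exp_add]; ring_nf
      have key : (s - 1) * (Real.exp s + 1) ≤ (Real.exp s - 1) * s := by
        nlinarith [Real.add_one_le_exp (s / 2), Real.exp_pos (s / 2),
          sq_nonneg (s / 2 - 1), hhalf]
      rw [show Real.sqrt t / 2 - 1 / 2 = (Real.sqrt t - 1) / 2 by ring, ← hsdef,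
        div_le_div_iff₀ (by norm_num : (0:ℝ) < 2) (by positivity)]
      nlinarith [key]
    · rw [div_le_div_iff₀ (by positivity) (by norm_num : (0:ℝ) < 2)]
      nlinarith [hEpos, hs]
end

section
/- Let κ : ℝ≥0 → ℝ be positive, differentiable, non-increasing with κ(0) = 1, and suppose there exist constants c₁ > 0, d₁ > 0, q₁ > 0 such that -κ'(t)·t/κ(t) ≥ c₁·t^{d₁} - q₁ for all t ≥ 0. Then for every ε ∈ (0,1] and every integer n ≥ 1, there exists a constant c (depending only on c₁, d₁, q₁) such that for all t ≥ c·(log(2n/ε))^{1/d₁}, κ(t) ≤ ε/(2n). -/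
lemma aux_log_le (u s : ℝ) (hu : 0 < u) (hs : 0 < s) :
    Real.log u ≤ s * u - 1 - Real.log s := by
  have h := Real.log_le_sub_one_of_pos (mul_pos hs hu)
  rw [Real.log_mul (ne_of_gt hs) (ne_of_gt hu)] at h
  linarith

lemma aux_F_anti (κ : ℝ → ℝ) (c₁ d₁ q₁ : ℝ)
    (hc₁ : 0 < c₁) (hd₁ : 0 < d₁)
    (hpos : ∀ t : ℝ, 0 ≤ t → 0 < κ t)
    (hdiff : ∀ t : ℝ, 0 ≤ t → DifferentiableAt ℝ κ t)
    (hlow : ∀ t : ℝ, 0 ≤ t → c₁ * t ^ d₁ - q₁ ≤ -(deriv κ t) * t / κ t) :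
    AntitoneOn (fun y => Real.log (κ y) + (c₁/d₁) * y ^ d₁ - q₁ * Real.log y)
      (Set.Ici (1:ℝ)) := by
  set F : ℝ → ℝ := fun y => Real.log (κ y) + (c₁/d₁) * y ^ d₁ - q₁ * Real.log y with hF
  have hder : ∀ x : ℝ, 0 < x → HasDerivAt F
      (deriv κ x / κ x + (c₁/d₁) * (d₁ * x ^ (d₁ - 1)) - q₁ * x⁻¹) x := by
    intro x hx
    have h1 : HasDerivAt (fun y => Real.log (κ y)) (deriv κ x / κ x) x :=
      ((hdiff x hx.le).hasDerivAt).log (ne_of_gt (hpos x hx.le))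
    have h2 : HasDerivAt (fun y : ℝ => y ^ d₁) (d₁ * x ^ (d₁ - 1)) x :=
      Real.hasDerivAt_rpow_const (Or.inl (ne_of_gt hx))
    have h3 : HasDerivAt Real.log x⁻¹ x := Real.hasDerivAt_log (ne_of_gt hx)
    exact (h1.add (h2.const_mul (c₁/d₁))).sub (h3.const_mul q₁)
  apply antitoneOn_of_deriv_nonpos (convex_Ici 1)
  · intro x hx
    have hx0 : (0:ℝ) < x := lt_of_lt_of_le one_pos hx
    exact ((hder x hx0).differentiableAt).continuousAt.continuousWithinAt
  · rw [interior_Ici]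
    intro x hx
    have hx0 : (0:ℝ) < x := lt_trans one_pos hx
    exact ((hder x hx0).differentiableAt).differentiableWithinAt
  · rw [interior_Ici]
    intro x hx
    have hx0 : (0:ℝ) < x := lt_trans one_pos hx
    rw [(hder x hx0).deriv]
    have hκx : 0 < κ x := hpos x hx0.le
    have hl := hlow x hx0.le
    -- deriv κ x / κ x ≤ (q₁ - c₁ * x ^ d₁) / x
    have hstep : deriv κ x / κ x ≤ (q₁ - c₁ * x ^ d₁) / x := by
      rw [div_le_div_iff₀ hκx hx0]
      have h' := (le_div_iff₀ hκx).mp hl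
      nlinarith [h']
    have hrp : x ^ (d₁ - 1) = x ^ d₁ / x := by
      rw [Real.rpow_sub hx0, Real.rpow_one]
    have hxd : (0:ℝ) < x ^ d₁ := Real.rpow_pos_of_pos hx0 _
    rw [hrp]
    have : (q₁ - c₁ * x ^ d₁) / x + (c₁/d₁) * (d₁ * (x ^ d₁ / x)) - q₁ * x⁻¹ = 0 := by
      field_simp
      ring
    linarith [hstep, this.le, this.ge]

set_option maxHeartbeats 1600000 in
/-- Critical radius bound for relative-distance smooth kernels: if κ is positive,
differentiable, non-increasing on [0,∞) with κ(0) = 1 and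
-κ'(t)·t/κ(t) ≥ c₁ t^{d₁} - q₁, then there is a constant c (depending only on
c₁, d₁, q₁) such that for every ε ∈ (0,1], n ≥ 1, and t ≥ c·(log(2n/ε))^{1/d₁},
we have κ(t) ≤ ε/(2n). -/
theorem critical_radius_bound
    (κ : ℝ → ℝ) (c₁ d₁ q₁ : ℝ)
    (hc₁ : 0 < c₁) (hd₁ : 0 < d₁) (hq₁ : 0 < q₁)
    (hpos : ∀ t : ℝ, 0 ≤ t → 0 < κ t)
    (hdiff : ∀ t : ℝ, 0 ≤ t → DifferentiableAt ℝ κ t)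
    (hmono : AntitoneOn κ (Set.Ici (0 : ℝ)))
    (hκ0 : κ 0 = 1)
    (hlow : ∀ t : ℝ, 0 ≤ t → c₁ * t ^ d₁ - q₁ ≤ -(deriv κ t) * t / κ t) :
    ∃ c : ℝ, ∀ ε : ℝ, 0 < ε → ε ≤ 1 → ∀ n : ℕ, 1 ≤ n →
      ∀ t : ℝ, c * (Real.log (2 * n / ε)) ^ (1 / d₁ : ℝ) ≤ t →
        κ t ≤ ε / (2 * n) := by
  have hlog2 : 0 < Real.log 2 := Real.log_pos (by norm_num)
  obtain ⟨s, hs_def⟩ : ∃ x : ℝ, x = c₁ / (2 * q₁) := ⟨_, rfl⟩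
  have hs : 0 < s := by rw [hs_def]; positivity
  obtain ⟨C₀, hC₀⟩ : ∃ x : ℝ, x = (q₁ / d₁) * (-1 - Real.log s) := ⟨_, rfl⟩
  obtain ⟨A, hA⟩ : ∃ x : ℝ, x = c₁ / d₁ + C₀ := ⟨_, rfl⟩
  obtain ⟨M, hM_def⟩ : ∃ x : ℝ, x = (2 * d₁ / c₁) * (1 + |A| / Real.log 2) := ⟨_, rfl⟩
  have hM : 0 < M := by rw [hM_def]; positivity
  refine ⟨M ^ (1/d₁ : ℝ) + (1 / Real.log 2) ^ (1/d₁ : ℝ), ?_⟩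
  intro ε hε hε1 n hn t ht
  have hn1 : (1:ℝ) ≤ (n:ℝ) := by exact_mod_cast hn
  have hnpos : (0:ℝ) < 2 * n := by linarith
  have hratio : (2:ℝ) ≤ 2 * n / ε := by
    rw [le_div_iff₀ hε]; nlinarith
  obtain ⟨L, hL_def⟩ : ∃ x : ℝ, x = Real.log (2 * ↑n / ε) := ⟨_, rfl⟩
  rw [← hL_def] at ht
  have hL : Real.log 2 ≤ L := hL_def ▸ Real.log_le_log (by norm_num) hratio
  have hL0 : 0 < L := lt_of_lt_of_le hlog2 hL
  -- t ≥ 1 and t ≥ (M*L)^{1/d₁}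
  have hLpow : (0:ℝ) ≤ L ^ (1/d₁ : ℝ) := Real.rpow_nonneg hL0.le _
  have ht1 : (1:ℝ) ≤ t := by
    have h1 : (1 / Real.log 2) ^ (1/d₁ : ℝ) * L ^ (1/d₁ : ℝ) ≤ t := by
      nlinarith [Real.rpow_nonneg hM.le (1/d₁ : ℝ), ht]
    have h2 : ((1 / Real.log 2) * L) ^ (1/d₁ : ℝ)
        = (1 / Real.log 2) ^ (1/d₁ : ℝ) * L ^ (1/d₁ : ℝ) :=
      Real.mul_rpow (by positivity) hL0.le
    have h3 : (1:ℝ) ≤ (1 / Real.log 2) * L := by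
      rw [one_div, inv_mul_eq_div, le_div_iff₀ hlog2]; linarith
    calc (1:ℝ) = 1 ^ (1/d₁ : ℝ) := (Real.one_rpow _).symm
      _ ≤ ((1 / Real.log 2) * L) ^ (1/d₁ : ℝ) :=
          Real.rpow_le_rpow (by norm_num) h3 (by positivity)
      _ ≤ t := by rw [h2]; exact h1
  have ht0 : (0:ℝ) < t := lt_of_lt_of_le one_pos ht1
  have htML : M * L ≤ t ^ (d₁ : ℝ) := by
    have h1 : (M * L) ^ (1/d₁ : ℝ) ≤ t := by
      rw [Real.mul_rpow hM.le hL0.le]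
      nlinarith [Real.rpow_nonneg (by positivity : (0:ℝ) ≤ 1 / Real.log 2) (1/d₁ : ℝ), ht, hLpow]
    calc M * L = ((M * L) ^ (1/d₁ : ℝ)) ^ (d₁ : ℝ) := by
          rw [← Real.rpow_mul (by positivity), one_div, inv_mul_cancel₀ (ne_of_gt hd₁),
            Real.rpow_one]
      _ ≤ t ^ (d₁ : ℝ) :=
          Real.rpow_le_rpow (Real.rpow_nonneg (by positivity) _) h1 hd₁.le
  -- F antitone: log κ t ≤ c₁/d₁ + q₁ log t - (c₁/d₁) t^d₁
  have hF := aux_F_anti κ c₁ d₁ q₁ hc₁ hd₁ hpos hdiff hlow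
    (Set.self_mem_Ici) (Set.mem_Ici.mpr ht1) ht1
  simp only [Real.log_one, Real.one_rpow, mul_one, mul_zero, sub_zero] at hF
  have hκ1 : κ 1 ≤ 1 := by
    have := hmono (Set.mem_Ici.mpr le_rfl) (Set.mem_Ici.mpr zero_le_one) zero_le_one
    rwa [hκ0] at this
  have hlogκ1 : Real.log (κ 1) ≤ 0 := Real.log_nonpos (hpos 1 zero_le_one).le hκ1
  -- bound q₁ log t
  have htd : (0:ℝ) < t ^ (d₁ : ℝ) := Real.rpow_pos_of_pos ht0 _
  have hlogt : q₁ * Real.log t ≤ (c₁ / (2 * d₁)) * t ^ (d₁ : ℝ) + C₀ := by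
    have h1 : Real.log (t ^ (d₁ : ℝ)) = d₁ * Real.log t := Real.log_rpow ht0 _
    have h2 := aux_log_le (t ^ (d₁ : ℝ)) s htd hs
    have h3 : q₁ * Real.log t = (q₁ / d₁) * Real.log (t ^ (d₁ : ℝ)) := by
      rw [h1]; field_simp
    rw [h3]
    have h4 : (q₁ / d₁) * Real.log (t ^ (d₁ : ℝ))
        ≤ (q₁ / d₁) * (s * t ^ (d₁ : ℝ) - 1 - Real.log s) :=
      mul_le_mul_of_nonneg_left h2 (by positivity)
    have h5 : (q₁ / d₁) * (s * t ^ (d₁ : ℝ) - 1 - Real.log s)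
        = (c₁ / (2 * d₁)) * t ^ (d₁ : ℝ) + C₀ := by
      rw [hC₀, hs_def]; field_simp; ring
    linarith
  have hmain : Real.log (κ t) ≤ A - (c₁ / (2 * d₁)) * t ^ (d₁ : ℝ) := by
    have : Real.log (κ t) ≤ Real.log (κ 1) + c₁/d₁ + q₁ * Real.log t
        - (c₁/d₁) * t ^ (d₁ : ℝ) := by linarith [hF]
    have hsplit : (c₁/d₁) * t ^ (d₁ : ℝ)
        = (c₁/(2*d₁)) * t ^ (d₁ : ℝ) + (c₁/(2*d₁)) * t ^ (d₁ : ℝ) := by ring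
    rw [hA]; linarith
  -- final: need (c₁/(2d₁)) t^d₁ ≥ A + L
  have hML : (2 * d₁ / c₁) * (A + L) ≤ M * L := by
    rw [hM_def]
    have h1 : |A| ≤ |A| * L / Real.log 2 := by
      rw [le_div_iff₀ hlog2]
      nlinarith [abs_nonneg A]
    have h2 : A ≤ |A| := le_abs_self A
    have h3 : (0:ℝ) ≤ 2 * d₁ / c₁ := by positivity
    have : A + L ≤ L + |A| * L / Real.log 2 := by linarith
    calc (2 * d₁ / c₁) * (A + L) ≤ (2 * d₁ / c₁) * (L + |A| * L / Real.log 2) :=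
          mul_le_mul_of_nonneg_left this h3
      _ = 2 * d₁ / c₁ * (1 + |A| / Real.log 2) * L := by ring
  have hfinal : A + L ≤ (c₁ / (2 * d₁)) * t ^ (d₁ : ℝ) := by
    have h1 : (2 * d₁ / c₁) * (A + L) ≤ t ^ (d₁ : ℝ) := le_trans hML htML
    have h2 : (c₁ / (2 * d₁)) * ((2 * d₁ / c₁) * (A + L)) = A + L := by
      rw [← mul_assoc, div_mul_div_comm]
      rw [show c₁ * (2 * d₁) / (2 * d₁ * c₁) = 1 by
        rw [div_eq_one_iff_eq (by positivity)]; ring, one_mul]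
    calc A + L = (c₁ / (2 * d₁)) * ((2 * d₁ / c₁) * (A + L)) := h2.symm
      _ ≤ (c₁ / (2 * d₁)) * t ^ (d₁ : ℝ) :=
          mul_le_mul_of_nonneg_left h1 (by positivity)
  have hlogfin : Real.log (κ t) ≤ -L := by linarith
  have hεn : (0:ℝ) < ε / (2 * n) := by positivity
  have hLneg : -L = Real.log (ε / (2 * n)) := by
    rw [hL_def, ← Real.log_inv]
    congr 1
    field_simp
  calc κ t = Real.exp (Real.log (κ t)) := (Real.exp_log (hpos t ht0.le)).symm
    _ ≤ Real.exp (-L) := Real.exp_le_exp.mpr hlogfin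
    _ = ε / (2 * n) := by rw [hLneg, Real.exp_log hεn]
end

section
/- Let κ : ℝ → ℝ be differentiable and non-increasing on [0, ∞), and let κ'_min ≤ min over z ∈ [0, T] of κ'(z)·z/κ(z), with κ'_min < 0 and κ(z) > 0 on [0,T]. Then for any γ > 0 and any a ≥ 0 with (1+γ)a ≤ T, we have κ((1+γ)a) ≥ κ(a)·(1 + γ·κ'_min). -/
/-!
By the mean value theorem, `κ((1+γ)a) - κ(a) = γ a κ'(c)` for some `c ∈ (a, (1+γ)a)`, and
`κ'(c) ≤ 0` because `κ` is antitone. Hence `a κ'(c) ≥ c κ'(c) ≥ κmin κ(c) ≥ κmin κ(a)`, the last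
step because `κmin ≤ 0` and `κ(c) ≤ κ(a)`.
-/

open Set

theorem AntitoneOn.mul_sub_le_sub_mul_of_mul_le_deriv_mul {f : ℝ → ℝ} {a b C : ℝ}
    (hab : a < b) (hf : ∀ z ∈ Icc a b, DifferentiableAt ℝ f z) (hanti : AntitoneOn f (Icc a b))
    (hC : C ≤ 0) (hderiv : ∀ z ∈ Ioo a b, C * f z ≤ deriv f z * z) :
    C * f a * (b - a) ≤ (f b - f a) * a := by
  obtain ⟨c, hc, hslope⟩ := exists_deriv_eq_slope f hab
    (fun z hz => (hf z hz).continuousAt.continuousWithinAt)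
    (fun z hz => (hf z (Ioo_subset_Icc_self hz)).differentiableWithinAt)
  have hfb : f b ≤ f a := hanti (left_mem_Icc.2 hab.le) (right_mem_Icc.2 hab.le) hab.le
  have hfc : f c ≤ f a := hanti (left_mem_Icc.2 hab.le) (Ioo_subset_Icc_self hc) hc.1.le
  have hderiv_nonpos : deriv f c ≤ 0 := by
    rw [hslope]
    exact div_nonpos_of_nonpos_of_nonneg (by linarith) (by linarith)
  have hbound : C * f a ≤ deriv f c * a :=
    calc C * f a ≤ C * f c := mul_le_mul_of_nonpos_left hfc hC
      _ ≤ deriv f c * c := hderiv c hc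
      _ ≤ deriv f c * a := mul_le_mul_of_nonpos_left hc.1.le hderiv_nonpos
  calc C * f a * (b - a) ≤ deriv f c * a * (b - a) :=
        mul_le_mul_of_nonneg_right hbound (by linarith)
    _ = (f b - f a) * a := by
        rw [hslope]
        field_simp [(sub_pos.2 hab).ne']

theorem kernel_stretch_bound_general
    (κ : ℝ → ℝ) (T κmin : ℝ)
    (hdiff : ∀ t ∈ Set.Icc (0 : ℝ) T, DifferentiableAt ℝ κ t)
    (hmono : AntitoneOn κ (Set.Icc (0 : ℝ) T))
    (hpos : ∀ z ∈ Set.Icc (0 : ℝ) T, 0 < κ z)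
    (hκmin : ∀ z ∈ Set.Icc (0 : ℝ) T, κmin ≤ deriv κ z * z / κ z) :
    ∀ γ : ℝ, 0 < γ → ∀ a : ℝ, 0 ≤ a → (1 + γ) * a ≤ T →
      κ ((1 + γ) * a) ≥ κ a * (1 + γ * κmin) := by
  intro γ hγ a ha hT
  have hT0 : (0 : ℝ) ∈ Icc 0 T := ⟨le_rfl, by nlinarith⟩
  -- the elasticity `κ'(z) z / κ(z)` vanishes at `z = 0`
  have hκmin_nonpos : κmin ≤ 0 := by simpa using hκmin 0 hT0
  rcases ha.eq_or_lt with rfl | ha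
  · have := hpos 0 hT0
    simp only [mul_zero, ge_iff_le]
    nlinarith [mul_nonpos_of_nonneg_of_nonpos hγ.le hκmin_nonpos]
  have hsub : Icc a ((1 + γ) * a) ⊆ Icc 0 T := Icc_subset_Icc ha.le hT
  have key := (hmono.mono hsub).mul_sub_le_sub_mul_of_mul_le_deriv_mul (by nlinarith)
    (fun z hz => hdiff z (hsub hz)) hκmin_nonpos
    (fun z hz => (le_div_iff₀ (hpos z (hsub (Ioo_subset_Icc_self hz)))).1
      (hκmin z (hsub (Ioo_subset_Icc_self hz))))
  have key' : κmin * κ a * γ * a ≤ (κ ((1 + γ) * a) - κ a) * a := by linarith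
  linarith [le_of_mul_le_mul_right key' ha]

/-- Key per-term inequality: if κ is differentiable, positive, non-increasing on [0,T]
and κmin ≤ κ'(z)·z/κ(z) on [0,T] with κmin < 0, then for γ > 0 and a ≥ 0 with
(1+γ)a ≤ T, κ((1+γ)a) ≥ κ(a)·(1 + γ·κmin). -/
theorem kernel_stretch_bound
    (κ : ℝ → ℝ) (T κmin : ℝ)
    (hdiff : ∀ t ∈ Set.Icc (0 : ℝ) T, DifferentiableAt ℝ κ t)
    (hmono : AntitoneOn κ (Set.Icc (0 : ℝ) T))
    (hpos : ∀ z ∈ Set.Icc (0 : ℝ) T, 0 < κ z)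
    (hκmin : ∀ z ∈ Set.Icc (0 : ℝ) T, κmin ≤ deriv κ z * z / κ z)
    (hneg : κmin < 0) :
    ∀ γ : ℝ, 0 < γ → ∀ a : ℝ, 0 ≤ a → (1 + γ) * a ≤ T →
      κ ((1 + γ) * a) ≥ κ a * (1 + γ * κmin) :=
  kernel_stretch_bound_general κ T κmin hdiff hmono hpos hκmin
end

section
/- Let Π : ℝ^d → ℝ^w be a linear map such that ‖Π a - Π b‖ ≥ ‖a - b‖ for all a, b in a finite set S ⊆ ℝ^d containing the finite point set M. Let κ : ℝ → ℝ be nonnegative and non-increasing. Then max over x ∈ ℝ^w of Σ_{m∈M} κ(‖x - Π m‖²) ≤ max over x ∈ ℝ^d of Σ_{m∈M} κ(‖x - m‖²). -/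
open scoped BigOperators
open Finset Filter Topology RealInnerProductSpace

lemma inner_sum_sum_eq {ι F : Type*} [NormedAddCommGroup F] [InnerProductSpace ℝ F]
    (A : Finset ι) (wt : ι → ℝ) (g : ι → F) :
    ⟪∑ m ∈ A, wt m • g m, ∑ m ∈ A, wt m • g m⟫
      = ∑ m ∈ A, ∑ m' ∈ A, wt m * wt m' * ⟪g m, g m'⟫ := by
  rw [sum_inner]
  refine Finset.sum_congr rfl fun m hm => ?_
  rw [real_inner_smul_left, inner_sum, Finset.mul_sum]
  refine Finset.sum_congr rfl fun m' hm' => ?_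
  rw [real_inner_smul_right]; ring

/-- Kirszbraun-type lemma for a single point: if `φ` expands distances on a finite set `T`,
then for any `x` there is a point `y` whose distance to each `m ∈ T` is at most
the distance from `x` to `φ m`. -/
lemma kirszbraun_point {d w : ℕ} (T : Finset (EuclideanSpace ℝ (Fin d))) (hT : T.Nonempty)
    (φ : EuclideanSpace ℝ (Fin d) → EuclideanSpace ℝ (Fin w)) (x : EuclideanSpace ℝ (Fin w))
    (hexp : ∀ a ∈ T, ∀ b ∈ T, ‖a - b‖ ≤ ‖φ a - φ b‖) :
    ∃ y, ∀ m ∈ T, ‖y - m‖ ≤ ‖x - φ m‖ := by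
  set r : EuclideanSpace ℝ (Fin d) → ℝ := fun m => ‖x - φ m‖ with hr
  set f : EuclideanSpace ℝ (Fin d) → ℝ := fun y => T.sup' hT (fun m => ‖y - m‖ ^ 2 - r m ^ 2) with hf
  have hcomp : ∀ m : EuclideanSpace ℝ (Fin d), Continuous fun y : EuclideanSpace ℝ (Fin d) => ‖y - m‖ ^ 2 - r m ^ 2 := fun m =>
    (((continuous_id.sub continuous_const).norm.pow 2).sub continuous_const)
  have hfc : Continuous f := by
    rw [continuous_iff_continuousAt]
    intro y
    exact Filter.Tendsto.finset_sup'_nhds_apply hT (fun m _ => ((hcomp m).tendsto y))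
  set K := convexHull ℝ (T : Set (EuclideanSpace ℝ (Fin d))) with hK
  have hKc : IsCompact K := T.finite_toSet.isCompact_convexHull ℝ
  have hKne : K.Nonempty := ⟨hT.choose, subset_convexHull ℝ _ hT.choose_spec⟩
  obtain ⟨y₀, hy₀K, hmin⟩ := hKc.exists_isMinOn hKne hfc.continuousOn
  set c := f y₀ with hc
  suffices hcle : c ≤ 0 by
    refine ⟨y₀, fun m hm => ?_⟩
    have h1 : ‖y₀ - m‖ ^ 2 - r m ^ 2 ≤ c :=
      Finset.le_sup' (fun m => ‖y₀ - m‖ ^ 2 - r m ^ 2) hm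
    have h2 : ‖y₀ - m‖ ^ 2 ≤ r m ^ 2 := by linarith
    exact (pow_le_pow_iff_left₀ (norm_nonneg _) (norm_nonneg _) two_ne_zero).1 h2
  by_contra hcpos
  push_neg at hcpos
  -- active set
  set A := T.filter (fun m => ‖y₀ - m‖ ^ 2 - r m ^ 2 = c) with hA
  have hAsub : A ⊆ T := Finset.filter_subset _ _
  have hAne : A.Nonempty := by
    obtain ⟨m, hm, hme⟩ := Finset.exists_mem_eq_sup' hT (fun m => ‖y₀ - m‖ ^ 2 - r m ^ 2)
    exact ⟨m, Finset.mem_filter.2 ⟨hm, hme.symm⟩⟩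
  have hAmem : ∀ m ∈ A, ‖y₀ - m‖ ^ 2 - r m ^ 2 = c := fun m hm =>
    (Finset.mem_filter.1 hm).2
  -- y₀ is in the convex hull of the active set
  have hy₀A : y₀ ∈ convexHull ℝ (A : Set (EuclideanSpace ℝ (Fin d))) := by
    by_contra hy₀A
    set K' := convexHull ℝ (A : Set (EuclideanSpace ℝ (Fin d))) with hK'
    have hK'c : IsCompact K' := A.finite_toSet.isCompact_convexHull ℝ
    have hK'conv : Convex ℝ K' := convex_convexHull ℝ _
    have hK'ne : K'.Nonempty := ⟨hAne.choose, subset_convexHull ℝ _ hAne.choose_spec⟩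
    obtain ⟨p, hpK', hp⟩ :=
      exists_norm_eq_iInf_of_complete_convex hK'ne hK'c.isComplete hK'conv y₀
    have hproj : ∀ z ∈ K', ⟪y₀ - p, z - p⟫ ≤ 0 :=
      (norm_eq_iInf_iff_real_inner_le_zero hK'conv hpK').1 hp
    set v := p - y₀ with hv
    have hvne : v ≠ 0 := by
      intro h
      exact hy₀A (by rw [show y₀ = p by rw [hv, sub_eq_zero] at h; exact h.symm]; exact hpK')
    have hvpos : 0 < ‖v‖ ^ 2 := by
      have := norm_pos_iff.2 hvne
      positivity
    have hkey : ∀ m ∈ A, ‖v‖ ^ 2 ≤ ⟪v, m - y₀⟫ := by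
      intro m hm
      have h1 : ⟪y₀ - p, m - p⟫ ≤ 0 := hproj m (subset_convexHull ℝ _ hm)
      have h2 : ⟪v, m - y₀⟫ = ⟪v, m - p⟫ + ⟪v, v⟫ := by
        rw [← inner_add_right]
        congr 1
        rw [hv]; abel
      have h3 : ⟪v, m - p⟫ = -⟪y₀ - p, m - p⟫ := by
        rw [hv, ← inner_neg_left, neg_sub]
      rw [h2, h3, real_inner_self_eq_norm_sq]
      linarith
    -- eventually for small positive t, all terms drop below c
    have hev : ∀ m ∈ T, ∀ᶠ t : ℝ in nhdsWithin 0 (Set.Ioi 0),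
        ‖(y₀ + t • v) - m‖ ^ 2 - r m ^ 2 < c := by
      intro m hm
      by_cases hmA : m ∈ A
      · have hIoc : Set.Ioc (0:ℝ) 1 ∈ nhdsWithin 0 (Set.Ioi 0) :=
          Ioc_mem_nhdsGT_of_mem (by constructor <;> norm_num)
        filter_upwards [hIoc] with t ht
        have e1 : ‖(y₀ + t • v) - m‖ ^ 2
            = ‖y₀ - m‖ ^ 2 + 2 * t * ⟪v, y₀ - m⟫ + t ^ 2 * ‖v‖ ^ 2 := by
          have : (y₀ + t • v) - m = (y₀ - m) + t • v := by abel
          rw [this, norm_add_sq_real, real_inner_smul_right, norm_smul,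
            real_inner_comm]
          simp [mul_pow, abs_of_pos ht.1]
          ring
        have e2 : ⟪v, y₀ - m⟫ ≤ -‖v‖ ^ 2 := by
          have := hkey m hmA
          have h4 : ⟪v, y₀ - m⟫ = -⟪v, m - y₀⟫ := by
            rw [← inner_neg_right, neg_sub]
          linarith
        have e3 : ‖y₀ - m‖ ^ 2 - r m ^ 2 = c := hAmem m hmA
        have ht1 : t ≤ 1 := ht.2
        have ht0 : 0 < t := ht.1
        have m1 : t * ⟪v, y₀ - m⟫ ≤ t * (-‖v‖ ^ 2) :=
          mul_le_mul_of_nonneg_left e2 (le_of_lt ht0)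
        have m2 : t * t ≤ 1 * t := mul_le_mul_of_nonneg_right ht1 (le_of_lt ht0)
        have m3 : (t - t * t) * ‖v‖ ^ 2 ≥ 0 :=
          mul_nonneg (by nlinarith) (le_of_lt hvpos)
        have m4 : 0 < t * ‖v‖ ^ 2 := mul_pos ht0 hvpos
        nlinarith [sq_nonneg t]
      · have hlt : ‖y₀ - m‖ ^ 2 - r m ^ 2 < c := by
          have hle : ‖y₀ - m‖ ^ 2 - r m ^ 2 ≤ c :=
            Finset.le_sup' (fun m => ‖y₀ - m‖ ^ 2 - r m ^ 2) hm
          rcases lt_or_eq_of_le hle with h | h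
          · exact h
          · exact absurd (Finset.mem_filter.2 ⟨hm, h⟩) hmA
        have hcont : Tendsto (fun t : ℝ => ‖(y₀ + t • v) - m‖ ^ 2 - r m ^ 2)
            (nhdsWithin 0 (Set.Ioi 0)) (𝓝 (‖y₀ - m‖ ^ 2 - r m ^ 2)) := by
          have : Continuous fun t : ℝ => ‖(y₀ + t • v) - m‖ ^ 2 - r m ^ 2 :=
            ((((continuous_const.add (continuous_id.smul continuous_const)).sub
              continuous_const).norm.pow 2).sub continuous_const)
          have h0 := (this.tendsto 0).mono_left
            (nhdsWithin_le_nhds : nhdsWithin (0:ℝ) (Set.Ioi 0) ≤ 𝓝 0)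
          simpa using h0
        exact hcont.eventually_lt_const hlt
    have hevall : ∀ᶠ t : ℝ in nhdsWithin 0 (Set.Ioi 0),
        ∀ m ∈ T, ‖(y₀ + t • v) - m‖ ^ 2 - r m ^ 2 < c :=
      (Filter.eventually_all_finset T).2 hev
    have hIoc : ∀ᶠ t : ℝ in nhdsWithin 0 (Set.Ioi 0), t ∈ Set.Ioc (0:ℝ) 1 :=
      Ioc_mem_nhdsGT_of_mem (by constructor <;> norm_num)
    obtain ⟨t, htm, htIoc⟩ := (hevall.and hIoc).exists
    -- the new point is in K
    have hpK : p ∈ K := convexHull_mono (by exact_mod_cast Finset.coe_subset.2 hAsub) hpK'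
    have hyt : y₀ + t • v ∈ K := by
      have := (convex_convexHull ℝ (T : Set (EuclideanSpace ℝ (Fin d)))).add_smul_sub_mem hy₀K hpK
        ⟨le_of_lt htIoc.1, htIoc.2⟩
      simpa [hv] using this
    have hlt : f (y₀ + t • v) < c := by
      rw [hf]
      exact (Finset.sup'_lt_iff hT).2 htm
    exact absurd (hmin hyt) (by simpa [hc] using not_le.2 hlt)
  -- final computation
  rw [Finset.convexHull_eq] at hy₀A
  obtain ⟨wt, hw0, hw1, hwc⟩ := hy₀A
  have hsum : ∑ m ∈ A, wt m • m = y₀ := by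
    have h := Finset.centerMass_eq_of_sum_1 A id hw1
    rw [h] at hwc
    simpa using hwc
  have hS2 : ∑ m ∈ A, wt m • (y₀ - m) = 0 := by
    simp only [smul_sub, Finset.sum_sub_distrib, hsum, ← Finset.sum_smul, hw1, one_smul,
      sub_self]
  have hkey : ∀ m ∈ A, ∀ m' ∈ A, ⟪x - φ m, x - φ m'⟫ ≤ ⟪y₀ - m, y₀ - m'⟫ - c := by
    intro m hm m' hm'
    have e1 : ‖y₀ - m‖ ^ 2 - r m ^ 2 = c := hAmem m hm
    have e2 : ‖y₀ - m'‖ ^ 2 - r m' ^ 2 = c := hAmem m' hm'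
    have e3 : ‖m' - m‖ ≤ ‖φ m' - φ m‖ :=
      hexp m' (hAsub hm') m (hAsub hm)
    have e3' : ‖m' - m‖ ^ 2 ≤ ‖φ m' - φ m‖ ^ 2 :=
      pow_le_pow_left₀ (norm_nonneg _) e3 2
    have i1 : ‖(x - φ m) - (x - φ m')‖ ^ 2
        = ‖x - φ m‖ ^ 2 - 2 * ⟪x - φ m, x - φ m'⟫ + ‖x - φ m'‖ ^ 2 :=
      norm_sub_sq_real _ _
    have i2 : ‖(y₀ - m) - (y₀ - m')‖ ^ 2
        = ‖y₀ - m‖ ^ 2 - 2 * ⟪y₀ - m, y₀ - m'⟫ + ‖y₀ - m'‖ ^ 2 :=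
      norm_sub_sq_real _ _
    have e4 : (x - φ m) - (x - φ m') = φ m' - φ m := by abel
    have e5 : (y₀ - m) - (y₀ - m') = m' - m := by abel
    rw [e4] at i1
    rw [e5] at i2
    have hrm : r m ^ 2 = ‖x - φ m‖ ^ 2 := by rw [hr]
    have hrm' : r m' ^ 2 = ‖x - φ m'‖ ^ 2 := by rw [hr]
    nlinarith
  have h0 : (0:ℝ) ≤ ⟪∑ m ∈ A, wt m • (x - φ m), ∑ m ∈ A, wt m • (x - φ m)⟫ :=
    real_inner_self_nonneg
  rw [inner_sum_sum_eq A wt (fun m => x - φ m)] at h0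
  have hle : ∑ m ∈ A, ∑ m' ∈ A, wt m * wt m' * ⟪x - φ m, x - φ m'⟫
      ≤ ∑ m ∈ A, ∑ m' ∈ A, wt m * wt m' * (⟪y₀ - m, y₀ - m'⟫ - c) := by
    refine Finset.sum_le_sum fun m hm => Finset.sum_le_sum fun m' hm' => ?_
    exact mul_le_mul_of_nonneg_left (hkey m hm m' hm')
      (mul_nonneg (hw0 m hm) (hw0 m' hm'))
  have hrhs : ∑ m ∈ A, ∑ m' ∈ A, wt m * wt m' * (⟪y₀ - m, y₀ - m'⟫ - c) = -c := by
    have h1 : ∑ m ∈ A, ∑ m' ∈ A, wt m * wt m' * ⟪y₀ - m, y₀ - m'⟫ = 0 := by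
      rw [← inner_sum_sum_eq A wt (fun m => y₀ - m), hS2]
      simp
    have h2 : ∑ m ∈ A, ∑ m' ∈ A, wt m * wt m' * c = c := by
      have : ∑ m ∈ A, ∑ m' ∈ A, wt m * wt m' * c
          = (∑ m ∈ A, wt m) * ((∑ m' ∈ A, wt m') * c) := by
        rw [Finset.sum_mul]
        refine Finset.sum_congr rfl fun m hm => ?_
        rw [Finset.sum_mul, Finset.mul_sum]
        refine Finset.sum_congr rfl fun m' hm' => ?_
        ring
      rw [this, hw1]; ring
    calc ∑ m ∈ A, ∑ m' ∈ A, wt m * wt m' * (⟪y₀ - m, y₀ - m'⟫ - c)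
        = ∑ m ∈ A, ∑ m' ∈ A, (wt m * wt m' * ⟪y₀ - m, y₀ - m'⟫ - wt m * wt m' * c) := by
          refine Finset.sum_congr rfl fun m hm => Finset.sum_congr rfl fun m' hm' => by ring
      _ = (∑ m ∈ A, ∑ m' ∈ A, wt m * wt m' * ⟪y₀ - m, y₀ - m'⟫)
            - ∑ m ∈ A, ∑ m' ∈ A, wt m * wt m' * c := by
          rw [← Finset.sum_sub_distrib]
          refine Finset.sum_congr rfl fun m hm => by rw [Finset.sum_sub_distrib]
      _ = -c := by rw [h1, h2]; ring
  rw [hrhs] at hle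
  linarith

/-- If a linear map proj expands distances on a finite set S ⊇ M, then the supremum of
the projected KDE is at most the supremum of the original KDE. -/
theorem projected_kde_max_le
    (d w : ℕ) (M S : Finset (EuclideanSpace ℝ (Fin d))) (hMS : M ⊆ S)
    (proj : EuclideanSpace ℝ (Fin d) →ₗ[ℝ] EuclideanSpace ℝ (Fin w))
    (hexp : ∀ a ∈ S, ∀ b ∈ S, ‖a - b‖ ≤ ‖proj a - proj b‖)
    (κ : ℝ → ℝ) (hnonneg : ∀ t : ℝ, 0 ≤ κ t) (hmono : Antitone κ) :
    (⨆ x : EuclideanSpace ℝ (Fin w), ∑ m ∈ M, κ (‖x - proj m‖ ^ 2)) ≤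
      ⨆ x : EuclideanSpace ℝ (Fin d), ∑ m ∈ M, κ (‖x - m‖ ^ 2) := by
  rcases M.eq_empty_or_nonempty with rfl | hM
  · simp
  have hbdd : BddAbove (Set.range fun x : EuclideanSpace ℝ (Fin d) =>
      ∑ m ∈ M, κ (‖x - m‖ ^ 2)) := by
    refine ⟨∑ _m ∈ M, κ 0, ?_⟩
    rintro z ⟨y, rfl⟩
    exact Finset.sum_le_sum fun m _ => hmono (by positivity)
  refine ciSup_le fun x => ?_
  obtain ⟨y, hy⟩ := kirszbraun_point M hM (fun m => proj m) x
    (fun a ha b hb => by simpa [map_sub] using hexp a (hMS ha) b (hMS hb))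
  have h1 : ∑ m ∈ M, κ (‖x - proj m‖ ^ 2) ≤ ∑ m ∈ M, κ (‖y - m‖ ^ 2) :=
    Finset.sum_le_sum fun m hm =>
      hmono (pow_le_pow_left₀ (norm_nonneg _) (hy m hm) 2)
  exact h1.trans (le_ciSup hbdd y)
end

section
/- Kirszbraun extension theorem (Euclidean case): for any subset S ⊆ ℝ^w and any L-Lipschitz function f : S → ℝ^d, there exists g : ℝ^w → ℝ^d such that g agrees with f on S and g is L-Lipschitz on all of ℝ^w. -/
set_option maxHeartbeats 1000000

open Filter Metric Set
open scoped RealInnerProductSpace Topology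

variable {E F : Type*} [NormedAddCommGroup E] [InnerProductSpace ℝ E]
  [NormedAddCommGroup F] [InnerProductSpace ℝ F] [FiniteDimensional ℝ F]

/-- Core finite Kirszbraun lemma: finitely many balls with Kirszbraun-compatible
centers and radii have a common point. -/
lemma kirszbraun_finite {ι : Type*} [Fintype ι] {L : ℝ} (hL : 0 ≤ L)
    (x : ι → E) (p : ι → F) (z : E)
    (hfl : ∀ i j, ‖p i - p j‖ ≤ L * ‖x i - x j‖) :
    ∃ y : F, ∀ i, ‖y - p i‖ ≤ L * ‖z - x i‖ := by
  classical
  cases isEmpty_or_nonempty ι with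
  | inl h => exact ⟨0, fun i => h.elim i⟩
  | inr hι =>
  set ψ : ι → F → ℝ := fun i y => ‖y - p i‖ ^ 2 - (L * ‖z - x i‖) ^ 2 with hψdef
  have hne : (Finset.univ : Finset ι).Nonempty := Finset.univ_nonempty
  set φ : F → ℝ := fun y => Finset.univ.sup' hne fun i => ψ i y with hφdef
  have hψc : ∀ i, Continuous (ψ i) := fun i =>
    ((continuous_id.sub continuous_const).norm.pow 2).sub continuous_const
  have hφc : Continuous φ := continuous_iff_continuousAt.2 fun a =>
    ContinuousAt.finset_sup'_apply hne fun i _ => (hψc i).continuousAt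
  obtain ⟨i₀⟩ := hι
  have h2 : Tendsto (fun y : F => ‖y - p i₀‖) (cocompact F) atTop := by
    refine tendsto_atTop_mono (fun y => ?_)
      (tendsto_atTop_add_const_right _ (-‖p i₀‖) tendsto_norm_cocompact_atTop)
    simpa [sub_eq_add_neg] using norm_sub_norm_le y (p i₀)
  have h3 : Tendsto (ψ i₀) (cocompact F) atTop := by
    have := tendsto_atTop_add_const_right (cocompact F) (-(L * ‖z - x i₀‖) ^ 2)
      ((tendsto_pow_atTop (two_ne_zero)).comp h2)
    simpa [hψdef, sub_eq_add_neg, Function.comp] using this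
  have hφt : Tendsto φ (cocompact F) atTop :=
    tendsto_atTop_mono (fun y => Finset.le_sup' _ (Finset.mem_univ i₀)) h3
  obtain ⟨y, hy⟩ := hφc.exists_forall_le hφt
  suffices h : φ y ≤ 0 by
    refine ⟨y, fun i => ?_⟩
    have h1 := (Finset.le_sup' (fun i => ψ i y) (Finset.mem_univ i)).trans h
    have h2 := norm_nonneg (y - p i)
    have h3 : 0 ≤ L * ‖z - x i‖ := mul_nonneg hL (norm_nonneg _)
    simp only [hψdef, sub_nonpos] at h1
    nlinarith
  by_contra hpos
  push_neg at hpos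
  -- active index set
  set I : Finset ι := Finset.univ.filter fun i => ψ i y = φ y with hIdef
  have hIne : I.Nonempty := by
    obtain ⟨i, _, hi⟩ := Finset.exists_mem_eq_sup' hne fun i => ψ i y
    exact ⟨i, Finset.mem_filter.2 ⟨Finset.mem_univ _, hi.symm⟩⟩
  -- the minimizer lies in the convex hull of the active centers
  have hhull : y ∈ convexHull ℝ (p '' ↑I) := by
    by_contra hy_hull
    have hconv : Convex ℝ (convexHull ℝ (p '' (↑I : Set ι))) := convex_convexHull _ _
    have hclosed : IsClosed (convexHull ℝ (p '' (↑I : Set ι))) :=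
      ((Set.toFinite (p '' ↑I)).isCompact_convexHull ℝ).isClosed
    obtain ⟨fl, c, hc1, hc2⟩ := geometric_hahn_banach_closed_point hconv hclosed hy_hull
    set v : F := (InnerProductSpace.toDual ℝ F).symm fl with hvdef
    have hvf : ∀ u : F, ⟪v, u⟫ = fl u := fun u => InnerProductSpace.toDual_symm_apply
    have key : ∀ i : ι, ∀ᶠ t in 𝓝[>] (0:ℝ), ψ i (y - t • v) < φ y := by
      intro i
      by_cases hiI : i ∈ I
      · -- active index: explicit quadratic computation
        have hpis : p i ∈ convexHull ℝ (p '' (↑I : Set ι)) :=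
          subset_convexHull _ _ ⟨i, by exact_mod_cast hiI, rfl⟩
        have hδ : 0 < fl y - fl (p i) := sub_pos.2 ((hc1 _ hpis).trans hc2)
        have hvv : ⟪v, y - p i⟫ = fl y - fl (p i) := by rw [hvf, map_sub]
        have hvne : v ≠ 0 := by
          intro h0
          rw [h0, inner_zero_left] at hvv
          linarith
        have hvpos : 0 < ‖v‖ ^ 2 := by have := norm_pos_iff.mpr hvne; positivity
        filter_upwards [Ioo_mem_nhdsGT
          (div_pos (by linarith : (0:ℝ) < 2 * (fl y - fl (p i))) hvpos)] with t ht
        obtain ⟨ht0, ht1⟩ := ht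
        have hexp : ψ i (y - t • v) = ψ i y - 2 * t * (fl y - fl (p i)) + t ^ 2 * ‖v‖ ^ 2 := by
          have hsub : y - t • v - p i = (y - p i) - t • v := by abel
          simp only [hψdef]
          rw [hsub, norm_sub_sq_real, real_inner_smul_right, real_inner_comm v (y - p i), hvv,
            norm_smul, Real.norm_eq_abs, mul_pow, sq_abs]
          ring
        have hψi : ψ i y = φ y := by
          have := Finset.mem_filter.1 hiI
          exact this.2
        have htv : t * ‖v‖ ^ 2 < 2 * (fl y - fl (p i)) := (lt_div_iff₀ hvpos).1 ht1
        rw [hexp, hψi]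
        nlinarith
      · -- inactive index: continuity
        have hlt : ψ i y < φ y := by
          refine lt_of_le_of_ne (Finset.le_sup' (fun j => ψ j y) (Finset.mem_univ i)) ?_
          intro h
          exact hiI (Finset.mem_filter.2 ⟨Finset.mem_univ _, h⟩)
        have hcont : Tendsto (fun t : ℝ => ψ i (y - t • v)) (𝓝[>] 0) (𝓝 (ψ i y)) := by
          have h1 : Tendsto (fun t : ℝ => y - t • v) (𝓝 0) (𝓝 y) := by
            have hc : Continuous fun t : ℝ => y - t • v := by continuity
            simpa using hc.tendsto 0
          exact ((hψc i).tendsto y).comp (h1.mono_left nhdsWithin_le_nhds)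
        exact hcont.eventually_lt_const hlt
    obtain ⟨t, ht⟩ := (eventually_all.2 key).exists
    exact absurd (hy (y - t • v)) (not_le.2 ((Finset.sup'_lt_iff hne).2 fun i _ => ht i))
  -- extract convex combination weights
  rw [convexHull_eq] at hhull
  obtain ⟨κ, tt, wt, zt, hw0, hw1, hzs, hbar⟩ := hhull
  have hbar' : ∑ i ∈ tt, wt i • zt i = y := by
    rw [← Finset.centerMass_eq_of_sum_1 _ _ hw1]; exact hbar
  -- choose representatives and set up vectors
  have hrep : ∀ i ∈ tt, ∃ j, j ∈ I ∧ p j = zt i := by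
    intro i hi
    obtain ⟨j, hj, hpj⟩ := hzs i hi
    exact ⟨j, by exact_mod_cast hj, hpj⟩
  have hrep' : ∀ i : κ, ∃ j : ι, i ∈ tt → j ∈ I ∧ p j = zt i := by
    intro i
    by_cases hi : i ∈ tt
    · obtain ⟨j, hj⟩ := hrep i hi
      exact ⟨j, fun _ => hj⟩
    · exact ⟨i₀, fun h => absurd h hi⟩
  choose rep hrepspec using hrep'
  set a : κ → E := fun i => L • (z - x (rep i)) with hadef
  have haprop : ∀ i ∈ tt, ∃ j, j ∈ I ∧ p j = zt i ∧ a i = L • (z - x j) := by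
    intro i hi
    refine ⟨rep i, (hrepspec i hi).1, (hrepspec i hi).2, ?_⟩
    rw [hadef]
  -- (A) norm identity for active points
  have hA : ∀ i ∈ tt, ‖y - zt i‖ ^ 2 = φ y + ‖a i‖ ^ 2 := by
    intro i hi
    obtain ⟨j, hjI, hpj, haj⟩ := haprop i hi
    have hψj : ψ j y = φ y := (Finset.mem_filter.1 hjI).2
    have : ‖a i‖ = L * ‖z - x j‖ := by
      rw [haj, norm_smul, Real.norm_eq_abs, abs_of_nonneg hL]
    rw [this, ← hpj]
    simp only [hψdef] at hψj
    linarith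
  -- (B) Lipschitz comparison
  have hB : ∀ i ∈ tt, ∀ i' ∈ tt, ‖zt i - zt i'‖ ≤ ‖a i - a i'‖ := by
    intro i hi i' hi'
    obtain ⟨j, hjI, hpj, haj⟩ := haprop i hi
    obtain ⟨j', hjI', hpj', haj'⟩ := haprop i' hi'
    have : a i - a i' = L • (x j' - x j) := by rw [haj, haj', ← smul_sub]; congr 1; abel
    rw [this, norm_smul, Real.norm_eq_abs, abs_of_nonneg hL, ← hpj, ← hpj']
    calc ‖p j - p j'‖ ≤ L * ‖x j - x j'‖ := hfl j j'
    _ = L * ‖x j' - x j‖ := by rw [norm_sub_rev]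
  -- (C) pointwise inner-product inequality
  have hC : ∀ i ∈ tt, ∀ i' ∈ tt, φ y + ⟪a i, a i'⟫ ≤ ⟪y - zt i, y - zt i'⟫ := by
    intro i hi i' hi'
    have e1 := norm_sub_sq_real (y - zt i) (y - zt i')
    have e2 := norm_sub_sq_real (a i) (a i')
    have e3 : y - zt i - (y - zt i') = zt i' - zt i := by abel
    rw [e3] at e1
    have e4 : ‖zt i' - zt i‖ ^ 2 ≤ ‖a i' - a i‖ ^ 2 := by
      have := hB i' hi' i hi
      have h1 := norm_nonneg (zt i' - zt i)
      nlinarith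
    have e5 : ‖a i - a i'‖ = ‖a i' - a i‖ := norm_sub_rev _ _
    have := hA i hi
    have := hA i' hi'
    rw [e5] at e2
    linarith
  -- expand the two double sums
  have hsum0 : ∑ i ∈ tt, wt i • (y - zt i) = 0 := by
    have h1 : ∑ i ∈ tt, wt i • (y - zt i)
        = (∑ i ∈ tt, wt i) • y - ∑ i ∈ tt, wt i • zt i := by
      rw [Finset.sum_smul]
      rw [← Finset.sum_sub_distrib]
      exact Finset.sum_congr rfl fun i _ => smul_sub _ _ _
    rw [h1, hw1, one_smul, hbar', sub_self]
  have hinner0 : (0:ℝ) = ∑ i ∈ tt, ∑ i' ∈ tt, wt i * wt i' * ⟪y - zt i, y - zt i'⟫ := by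
    have h0 : (0:ℝ) = ⟪∑ i ∈ tt, wt i • (y - zt i), ∑ i' ∈ tt, wt i' • (y - zt i')⟫ := by
      rw [hsum0, inner_zero_left]
    rw [h0, sum_inner]
    refine Finset.sum_congr rfl fun i _ => ?_
    rw [real_inner_smul_left, inner_sum, Finset.mul_sum]
    exact Finset.sum_congr rfl fun i' _ => by rw [real_inner_smul_right]; ring
  have hinnerb : ‖∑ i ∈ tt, wt i • a i‖ ^ 2
      = ∑ i ∈ tt, ∑ i' ∈ tt, wt i * wt i' * ⟪a i, a i'⟫ := by
    rw [← real_inner_self_eq_norm_sq, sum_inner]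
    refine Finset.sum_congr rfl fun i _ => ?_
    rw [real_inner_smul_left, inner_sum, Finset.mul_sum]
    exact Finset.sum_congr rfl fun i' _ => by rw [real_inner_smul_right]; ring
  have hle : ∑ i ∈ tt, ∑ i' ∈ tt, wt i * wt i' * (φ y + ⟪a i, a i'⟫)
      ≤ ∑ i ∈ tt, ∑ i' ∈ tt, wt i * wt i' * ⟪y - zt i, y - zt i'⟫ := by
    refine Finset.sum_le_sum fun i hi => Finset.sum_le_sum fun i' hi' => ?_
    exact mul_le_mul_of_nonneg_left (hC i hi i' hi')
      (mul_nonneg (hw0 i hi) (hw0 i' hi'))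
  have hexpand : ∑ i ∈ tt, ∑ i' ∈ tt, wt i * wt i' * (φ y + ⟪a i, a i'⟫)
      = φ y + ‖∑ i ∈ tt, wt i • a i‖ ^ 2 := by
    have h1 : ∀ i ∈ tt, ∑ i' ∈ tt, wt i * wt i' * (φ y + ⟪a i, a i'⟫)
        = wt i * φ y + ∑ i' ∈ tt, wt i * wt i' * ⟪a i, a i'⟫ := by
      intro i hi
      simp only [mul_add]
      rw [Finset.sum_add_distrib]
      congr 1
      have : ∀ i' ∈ tt, wt i * wt i' * φ y = wt i' * (wt i * φ y) := fun i' _ => by ring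
      rw [Finset.sum_congr rfl this, ← Finset.sum_mul, hw1, one_mul]
    rw [Finset.sum_congr rfl h1, Finset.sum_add_distrib, ← Finset.sum_mul, hw1, one_mul,
      hinnerb]
  rw [hexpand, ← hinner0] at hle
  nlinarith [sq_nonneg ‖∑ i ∈ tt, wt i • a i‖]

/-- One-point Kirszbraun extension: given an `L`-Lipschitz map on `T` and a new point `z`,
there is a value `y` compatible with all the Lipschitz constraints. -/
lemma kirszbraun_one_point {L : NNReal} {T : Set E} {f : E → F}
    (hf : LipschitzOnWith L f T) (z : E) :
    ∃ y : F, ∀ x ∈ T, dist y (f x) ≤ L * dist z x := by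
  classical
  rcases T.eq_empty_or_nonempty with rfl | ⟨x₀, hx₀⟩
  · exact ⟨0, fun x hx => absurd hx (Set.notMem_empty x)⟩
  have hdist := (lipschitzOnWith_iff_dist_le_mul).1 hf
  have key : (Metric.closedBall (f x₀) (L * dist z x₀) ∩
      ⋂ i : T, Metric.closedBall (f i) (L * dist z i)).Nonempty := by
    refine (isCompact_closedBall _ _).inter_iInter_nonempty _
      (fun i => Metric.isClosed_closedBall) fun u => ?_
    obtain ⟨y, hy⟩ := kirszbraun_finite (E := E) (F := F) L.coe_nonneg
      (fun i : ((insert ⟨x₀, hx₀⟩ u : Finset T) : Set T) => ((i : T) : E))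
      (fun i => f ((i : T) : E)) z (by
        intro i j
        rw [← dist_eq_norm, ← dist_eq_norm]
        exact hdist _ (i : T).2 _ (j : T).2)
    refine ⟨y, ?_, ?_⟩
    · have := hy ⟨⟨x₀, hx₀⟩, Finset.mem_insert_self _ _⟩
      rw [Metric.mem_closedBall, dist_eq_norm, dist_eq_norm]
      exact this
    · refine Set.mem_iInter₂.2 fun i hi => ?_
      have := hy ⟨i, Finset.mem_insert_of_mem hi⟩
      rw [Metric.mem_closedBall, dist_eq_norm, dist_eq_norm]
      exact this
  obtain ⟨y, _, hy⟩ := key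
  refine ⟨y, fun x hx => ?_⟩
  have := Set.mem_iInter.1 hy ⟨x, hx⟩
  exact Metric.mem_closedBall.1 this

/-- One-point extension, function form. -/
lemma kirszbraun_insert {L : NNReal} {T : Set E} {f : E → F}
    (hf : LipschitzOnWith L f T) (z : E) :
    ∃ g : E → F, LipschitzOnWith L g (insert z T) ∧ Set.EqOn g f T := by
  classical
  obtain ⟨y, hy⟩ := kirszbraun_one_point hf z
  refine ⟨fun x => if x = z then y else f x, ?_, ?_⟩
  · rw [lipschitzOnWith_iff_dist_le_mul]
    have hdist := (lipschitzOnWith_iff_dist_le_mul).1 hf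
    intro a ha b hb
    by_cases haz : a = z <;> by_cases hbz : b = z
    · subst haz; subst hbz; simp
    · subst haz
      rw [if_pos rfl, if_neg hbz]
      exact hy b (hb.resolve_left hbz)
    · subst hbz
      rw [if_neg haz, if_pos rfl, dist_comm (f a) y, dist_comm a b]
      exact hy a (ha.resolve_left haz)
    · rw [if_neg haz, if_neg hbz]
      exact hdist a (ha.resolve_left haz) b (hb.resolve_left hbz)
  · intro x hx
    simp only
    by_cases hxz : x = z
    · subst hxz
      have := hy x hx
      simp only [dist_self, mul_zero] at this
      have : dist y (f x) = 0 := le_antisymm this dist_nonneg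
      simp [dist_eq_zero.1 this]
    · simp [hxz]

/-- Kirszbraun extension theorem (Euclidean case): any L-Lipschitz map on a subset
S ⊆ ℝ^w with values in ℝ^d extends to an L-Lipschitz map on all of ℝ^w. -/
theorem kirszbraun_extension
    (w d : ℕ) (S : Set (EuclideanSpace ℝ (Fin w)))
    (f : EuclideanSpace ℝ (Fin w) → EuclideanSpace ℝ (Fin d))
    (L : NNReal) (hf : LipschitzOnWith L f S) :
    ∃ g : EuclideanSpace ℝ (Fin w) → EuclideanSpace ℝ (Fin d),
      (∀ x ∈ S, g x = f x) ∧ LipschitzWith L g := by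
  classical
  rcases S.eq_empty_or_nonempty with rfl | ⟨x₀, hx₀⟩
  · exact ⟨fun _ => 0, fun x hx => absurd hx (Set.notMem_empty x),
      (LipschitzWith.const 0).weaken zero_le⟩
  -- extension over finitely many extra points
  have hfin : ∀ G : Finset (EuclideanSpace ℝ (Fin w)), ∃ g : EuclideanSpace ℝ (Fin w) → EuclideanSpace ℝ (Fin d),
      LipschitzOnWith L g (S ∪ ↑G) ∧ Set.EqOn g f S := by
    intro G
    induction G using Finset.induction_on with
    | empty => exact ⟨f, by simpa using hf, fun x _ => rfl⟩
    | @insert a G _ ih =>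
      obtain ⟨g, hg, hgf⟩ := ih
      obtain ⟨g', hg', hgg'⟩ := kirszbraun_insert hg a
      refine ⟨g', ?_, fun x hx => (hgg' (Or.inl hx)).trans (hgf hx)⟩
      have : (S ∪ ↑(insert a G) : Set (EuclideanSpace ℝ (Fin w))) = insert a (S ∪ ↑G) := by
        rw [Finset.coe_insert, Set.union_insert]
      rwa [this]
  -- the compact product of balls
  set C : Set (EuclideanSpace ℝ (Fin w) → EuclideanSpace ℝ (Fin d)) :=
    Set.pi Set.univ fun xx => Metric.closedBall (f x₀) (L * dist xx x₀) with hCdef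
  have hCcomp : IsCompact C := isCompact_univ_pi fun xx => isCompact_closedBall _ _
  set t : Finset (EuclideanSpace ℝ (Fin w)) → Set (EuclideanSpace ℝ (Fin w) → EuclideanSpace ℝ (Fin d)) :=
    fun G => {g | LipschitzOnWith L g (S ∪ ↑G) ∧ Set.EqOn g f S} with htdef
  have htclosed : ∀ G, IsClosed (t G) := by
    intro G
    have h1 : IsClosed {g : EuclideanSpace ℝ (Fin w) → EuclideanSpace ℝ (Fin d) | LipschitzOnWith L g (S ∪ ↑G)} := by
      have he : {g : EuclideanSpace ℝ (Fin w) → EuclideanSpace ℝ (Fin d) | LipschitzOnWith L g (S ∪ ↑G)} =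
          ⋂ (a) (_ : a ∈ S ∪ ↑G) (b) (_ : b ∈ S ∪ ↑G),
            {g : EuclideanSpace ℝ (Fin w) → EuclideanSpace ℝ (Fin d) | dist (g a) (g b) ≤ L * dist a b} := by
        ext g
        rw [Set.mem_setOf_eq, lipschitzOnWith_iff_dist_le_mul]
        simp only [Set.mem_iInter, Set.mem_setOf_eq]
      rw [he]
      exact isClosed_iInter fun a => isClosed_iInter fun _ => isClosed_iInter fun b =>
        isClosed_iInter fun _ => isClosed_le
          ((continuous_apply a).dist (continuous_apply b)) continuous_const
    have h2 : IsClosed {g : EuclideanSpace ℝ (Fin w) → EuclideanSpace ℝ (Fin d) | Set.EqOn g f S} := by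
      have he : {g : EuclideanSpace ℝ (Fin w) → EuclideanSpace ℝ (Fin d) | Set.EqOn g f S} =
          ⋂ (x) (_ : x ∈ S), {g : EuclideanSpace ℝ (Fin w) → EuclideanSpace ℝ (Fin d) | g x = f x} := by
        ext g
        simp only [Set.mem_setOf_eq, Set.mem_iInter]
        exact Iff.rfl
      rw [he]
      exact isClosed_iInter fun x => isClosed_iInter fun _ =>
        isClosed_eq (continuous_apply x) continuous_const
    have : t G = {g : EuclideanSpace ℝ (Fin w) → EuclideanSpace ℝ (Fin d) | LipschitzOnWith L g (S ∪ ↑G)} ∩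
        {g : EuclideanSpace ℝ (Fin w) → EuclideanSpace ℝ (Fin d) | Set.EqOn g f S} := rfl
    rw [this]
    exact h1.inter h2
  have hFIP : ∀ u : Finset (Finset (EuclideanSpace ℝ (Fin w))), (C ∩ ⋂ G ∈ u, t G).Nonempty := by
    intro u
    obtain ⟨g, hg, hgf⟩ := hfin (u.sup id)
    have hdist := lipschitzOnWith_iff_dist_le_mul.1 hg
    set g' : EuclideanSpace ℝ (Fin w) → EuclideanSpace ℝ (Fin d) := fun xx => if xx ∈ S ∪ ↑(u.sup id) then g xx else f x₀ with hg'def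
    have hg'eq : Set.EqOn g' g (S ∪ ↑(u.sup id)) := fun xx hxx => if_pos hxx
    refine ⟨g', ?_, ?_⟩
    · rw [hCdef]
      refine Set.mem_univ_pi.2 fun xx => ?_
      rw [Metric.mem_closedBall]
      by_cases hxx : xx ∈ S ∪ ↑(u.sup id)
      · have h1 : g' xx = g xx := if_pos hxx
        have h2 : g x₀ = f x₀ := hgf hx₀
        rw [h1, ← h2]
        exact hdist xx hxx x₀ (Or.inl hx₀)
      · have h1 : g' xx = f x₀ := if_neg hxx
        rw [h1, dist_self]
        positivity
    · refine Set.mem_iInter₂.2 fun G hG => ?_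
      have hsub : (S ∪ ↑G : Set (EuclideanSpace ℝ (Fin w))) ⊆ S ∪ ↑(u.sup id) :=
        Set.union_subset_union_right S (Finset.coe_subset.2 (Finset.le_sup (f := id) hG))
      constructor
      · rw [lipschitzOnWith_iff_dist_le_mul]
        intro a ha b hb
        rw [hg'eq (hsub ha), hg'eq (hsub hb)]
        exact hdist a (hsub ha) b (hsub hb)
      · intro x hx
        rw [hg'eq (Or.inl hx)]
        exact hgf hx
  obtain ⟨g, _, hgt⟩ := hCcomp.inter_iInter_nonempty t htclosed hFIP
  have hgt' := Set.mem_iInter.1 hgt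
  refine ⟨g, fun x hx => (hgt' ∅).2 hx, ?_⟩
  rw [lipschitzWith_iff_dist_le_mul]
  intro a b
  exact lipschitzOnWith_iff_dist_le_mul.1 (hgt' {a, b}).1 a (Or.inr (by simp))
    b (Or.inr (by simp))
end
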